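/- Let L be a C-loop such that for every z ∈ L both (id, L_z∘L_z, J∘L_z∘L_z∘J) and (R_z∘R_z, id, J∘R_z∘R_z∘J) are autotopisms of L. Then x² lies in the centrum of L for every x ∈ L, i.e., x² commutes with every element of L. -/
import Mathlib


theorem stmt {L : Type*} (mul : L → L → L) (e : L)
    (hid : ∀ x, mul e x = x ∧ mul x e = x)
    (hLbij : ∀ a, Function.Bijective (fun x => mul a x))
    (hRbij : ∀ a, Function.Bijective (fun x => mul x a))
    (hC : ∀ x y z, mul x (mul y (mul y z)) = mul (mul (mul x y) y) z)
    (inv : L → L)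
    (hlip : ∀ x y, mul (inv x) (mul x y) = y)
    (hrip : ∀ x y, mul (mul y x) (inv x) = y)
    (haut1 : ∀ z x y, mul x (mul z (mul z y)) =
      inv (mul z (mul z (inv (mul x y)))))
    (haut2 : ∀ z x y, mul (mul (mul x z) z) y =
      inv (mul (mul (inv (mul x y)) z) z)) :
    ∀ x y, mul (mul x x) y = mul y (mul x x) := by
  intro x y
  have hC' : mul x (mul x y) = mul (mul x x) y := by
    have h := hC e x y
    rwa [(hid _).1, (hid _).1] at h
  have h1 := haut1 x e y
  rw [(hid _).1, (hid _).1] at h1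
  have h2 := haut1 x y e
  rw [(hid _).2, (hid _).2] at h2
  rw [← hC', h1, ← h2]
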